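/- Let B and C be categories, let B be an object of B and C an object of C, and let U : Age_B(B) → Age_C(C) be a faithful functor such that: (1) U(B) = C; (2) for every object B' of Age_B(B) with U(B') = C one has Hom_B(B,B') ≠ ∅; and (3) for every f ∈ Hom_C(C,C) there exist an object B' of Age_B(B) with U(B') = C and a morphism g ∈ Hom_B(B',B) with U(g) = f. Then for every object A of Age_B(B) and every positive integer t: if C ⟶ (C)^{U(A)}_{k,t} holds in C for all k ≥ 2, then B ⟶ (B)^{A}_{k,t} holds in B for all k ≥ 2; in particular, if U(A) has finite big Ramsey degree T(U(A),C) in C, then A has finite big Ramsey degree in B and T(A,B) ≤ T(U(A),C). -/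

import Mathlib

/-!
Colour `Hom(U A, C)` by pulling a colouring of `Hom(A, B)` back along the injective map
`f ↦ U f` (faithfulness); morphisms outside its image get an arbitrary colour. A good
`w' : C ⟶ C` for this colouring is `U g` for some `g : B' ⟶ B` by (3), and (2) gives some
`e : B ⟶ B'`. Then `U (f ≫ e ≫ g) = U (f ≫ e) ≫ w'`, so the colours that `w = e ≫ g`
sees on `Hom(A, B)` are among those `w'` sees on `Hom(U A, C)`.
-/

open CategoryTheory

universe v₁ u₁ v₂ u₂

/-- `ramseyArrow A B X k t` means `X ⟶ (B)^A_{k,t}`. -/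
def ramseyArrow {C : Type u₁} [Category.{v₁} C] (A B X : C) (k t : ℕ) : Prop :=
  ∀ χ : (A ⟶ X) → Fin k, ∃ w : B ⟶ X,
    (χ '' (Set.range fun f : A ⟶ B => f ≫ w)).ncard ≤ t

/-- The age of `X` in `C`: the full subcategory of objects admitting a
morphism into `X`. -/
abbrev AgeCat {C : Type u₁} [Category.{v₁} C] (X : C) :=
  ObjectProperty.FullSubcategory (fun A : C => Nonempty (A ⟶ X))

theorem ramseyArrow.of_injective_of_lift {𝒳 : Type u₁} [Category.{v₁} 𝒳]
    {𝒴 : Type u₂} [Category.{v₂} 𝒴] {A B X : 𝒳} {A' B' X' : 𝒴} {k t : ℕ} [NeZero k]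
    (h : ramseyArrow A' B' X' k t) (φ : (A ⟶ X) → (A' ⟶ X')) (hφ : Function.Injective φ)
    (hlift : ∀ w' : B' ⟶ X', ∃ w : B ⟶ X,
      ∀ f : A ⟶ B, φ (f ≫ w) ∈ Set.range fun f' : A' ⟶ B' => f' ≫ w') :
    ramseyArrow A B X k t := by
  intro χ
  obtain ⟨w', hw'⟩ := h (Function.extend φ χ fun _ => 0)
  obtain ⟨w, hw⟩ := hlift w'
  refine ⟨w, le_trans (Set.ncard_le_ncard ?_ (Set.toFinite _)) hw'⟩
  rintro _ ⟨_, ⟨f, rfl⟩, rfl⟩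
  obtain ⟨f', hf'⟩ := hw f
  exact ⟨_, ⟨f', rfl⟩, by rw [hf', hφ.extend_apply]⟩

namespace AgeCat

variable {B : Type u₁} [Category.{v₁} B] {C : Type u₂} [Category.{v₂} C] {B₀ : B} {C₀ : C}

abbrev self (X : B) : AgeCat X := ⟨X, ⟨𝟙 X⟩⟩

def homMapOfObjEq (U : AgeCat B₀ ⥤ AgeCat C₀) (hU : U.obj (self B₀) = self C₀)
    (A : AgeCat B₀) (f : A.obj ⟶ B₀) : (U.obj A).obj ⟶ C₀ :=
  (U.map (ObjectProperty.homMk f : A ⟶ self B₀) ≫ eqToHom hU).hom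

theorem homMapOfObjEq_injective (U : AgeCat B₀ ⥤ AgeCat C₀) [U.Faithful]
    (hU : U.obj (self B₀) = self C₀) (A : AgeCat B₀) :
    Function.Injective (homMapOfObjEq U hU A) := by
  intro f₁ f₂ h
  have hmap := U.map_injective <| (cancel_mono (eqToHom hU)).mp <| ObjectProperty.hom_ext _ h
  exact congrArg InducedCategory.Hom.hom hmap

theorem exists_homMapOfObjEq_comp_mem_range (U : AgeCat B₀ ⥤ AgeCat C₀)
    (hU : U.obj (self B₀) = self C₀)
    (hsurj : ∀ B' : AgeCat B₀, U.obj B' = self C₀ → Nonempty (self B₀ ⟶ B'))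
    (hlift : ∀ f : self C₀ ⟶ self C₀, ∃ (B' : AgeCat B₀) (h : U.obj B' = self C₀)
      (g : B' ⟶ self B₀), U.map g = eqToHom h ≫ f ≫ eqToHom hU.symm)
    (A : AgeCat B₀) (w' : C₀ ⟶ C₀) :
    ∃ w : B₀ ⟶ B₀, ∀ f : A.obj ⟶ B₀,
      homMapOfObjEq U hU A (f ≫ w) ∈ Set.range fun f' : (U.obj A).obj ⟶ C₀ => f' ≫ w' := by
  obtain ⟨B', hB', g, hg⟩ := hlift (ObjectProperty.homMk w')
  obtain ⟨e⟩ := hsurj B' hB'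
  refine ⟨(e ≫ g).hom, fun f => ⟨(U.map (ObjectProperty.homMk f ≫ e) ≫ eqToHom hB').hom, ?_⟩⟩
  have hcomp : (ObjectProperty.homMk (f ≫ (e ≫ g).hom) : A ⟶ self B₀)
      = ObjectProperty.homMk f ≫ e ≫ g := rfl
  have hmap : U.map (ObjectProperty.homMk f ≫ e ≫ g) ≫ eqToHom hU
      = (U.map (ObjectProperty.homMk f ≫ e) ≫ eqToHom hB') ≫ ObjectProperty.homMk w' := by
    simp [hg]
  rw [homMapOfObjEq, hcomp, hmap]
  rfl

end AgeCat

theorem stmt4_general {B : Type u₁} [Category.{v₁} B] {C : Type u₂} [Category.{v₂} C]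
    (B₀ : B) (C₀ : C)
    (U : AgeCat B₀ ⥤ AgeCat C₀) [U.Faithful]
    (h1 : U.obj ⟨B₀, ⟨𝟙 B₀⟩⟩ = ⟨C₀, ⟨𝟙 C₀⟩⟩)
    (h2 : ∀ B' : AgeCat B₀, U.obj B' = ⟨C₀, ⟨𝟙 C₀⟩⟩ →
      Nonempty ((⟨B₀, ⟨𝟙 B₀⟩⟩ : AgeCat B₀) ⟶ B'))
    (h3 : ∀ f : (⟨C₀, ⟨𝟙 C₀⟩⟩ : AgeCat C₀) ⟶ ⟨C₀, ⟨𝟙 C₀⟩⟩,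
      ∃ (B' : AgeCat B₀) (h : U.obj B' = ⟨C₀, ⟨𝟙 C₀⟩⟩)
        (g : B' ⟶ (⟨B₀, ⟨𝟙 B₀⟩⟩ : AgeCat B₀)),
        U.map g = eqToHom h ≫ f ≫ eqToHom h1.symm)
    (A : AgeCat B₀) (t : ℕ)
    (hC : ∀ k, 2 ≤ k → ramseyArrow (U.obj A).obj C₀ C₀ k t) :
    ∀ k, 2 ≤ k → ramseyArrow A.obj B₀ B₀ k t := by
  intro k hk
  have : NeZero k := ⟨by omega⟩
  exact (hC k hk).of_injective_of_lift _ (AgeCat.homMapOfObjEq_injective U h1 A)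
    (AgeCat.exists_homMapOfObjEq_comp_mem_range U h1 h2 h3 A)

theorem stmt4 {B : Type u₁} [Category.{v₁} B] {C : Type u₂} [Category.{v₂} C]
    (B₀ : B) (C₀ : C)
    (U : AgeCat B₀ ⥤ AgeCat C₀) [U.Faithful]
    (h1 : U.obj ⟨B₀, ⟨𝟙 B₀⟩⟩ = ⟨C₀, ⟨𝟙 C₀⟩⟩)
    (h2 : ∀ B' : AgeCat B₀, U.obj B' = ⟨C₀, ⟨𝟙 C₀⟩⟩ →
      Nonempty ((⟨B₀, ⟨𝟙 B₀⟩⟩ : AgeCat B₀) ⟶ B'))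
    (h3 : ∀ f : (⟨C₀, ⟨𝟙 C₀⟩⟩ : AgeCat C₀) ⟶ ⟨C₀, ⟨𝟙 C₀⟩⟩,
      ∃ (B' : AgeCat B₀) (h : U.obj B' = ⟨C₀, ⟨𝟙 C₀⟩⟩)
        (g : B' ⟶ (⟨B₀, ⟨𝟙 B₀⟩⟩ : AgeCat B₀)),
        U.map g = eqToHom h ≫ f ≫ eqToHom h1.symm)
    (A : AgeCat B₀) (t : ℕ) (ht : 1 ≤ t)
    (hC : ∀ k, 2 ≤ k → ramseyArrow (U.obj A).obj C₀ C₀ k t) :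
    ∀ k, 2 ≤ k → ramseyArrow A.obj B₀ B₀ k t :=
  stmt4_general B₀ C₀ U h1 h2 h3 A t hC
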